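/- Let Q be a positive semidefinite n×n Hermitian matrix, y ∈ ℂⁿ, and z ∈ ℂ with Im(z) > 0. Then |z| · |1 + y* (Q - zI)⁻¹ y| ≥ Im(z). -/

import Mathlib

open Matrix
open scoped ComplexOrder

/-!
Put `x = (Q - z)⁻¹ y`, so that `y = (Q - z) x`. Since `Q` is Hermitian,
`yᴴ x = xᴴ Q x - z̄ ‖x‖²`, hence `z (1 + yᴴ x) = z + z · xᴴ Q x - |z|² ‖x‖²`.
Both quadratic forms are real and `xᴴ Q x ≥ 0`, so the imaginary part of `z (1 + yᴴ x)` is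
`Im z · (1 + xᴴ Q x) ≥ Im z`, and it bounds the modulus `|z| · |1 + yᴴ x|`.
-/

namespace Matrix

variable {m : Type*} [Fintype m] [DecidableEq m]

theorem IsHermitian.isUnit_det_sub_smul_one {𝕜 : Type*} [RCLike 𝕜] {Q : Matrix m m 𝕜}
    (hQ : Q.IsHermitian) {z : 𝕜} (hz : RCLike.im z ≠ 0) : IsUnit (Q - z • 1).det := by
  have hz_spec : z ∉ spectrum 𝕜 Q := by
    rw [hQ.spectrum_eq_image_range]
    rintro ⟨_, _, rfl⟩
    exact hz (RCLike.ofReal_im _)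
  rw [spectrum.notMem_iff, Algebra.algebraMap_eq_smul_one, isUnit_iff_isUnit_det] at hz_spec
  rw [← neg_sub, det_neg]
  exact ((isUnit_neg_one.pow _).mul hz_spec)

theorem IsHermitian.star_sub_smul_one_mulVec_dotProduct {α : Type*} [CommRing α] [StarRing α]
    {Q : Matrix m m α} (hQ : Q.IsHermitian) (z : α) (x : m → α) :
    star ((Q - z • 1) *ᵥ x) ⬝ᵥ x = star x ⬝ᵥ Q *ᵥ x - star z * (star x ⬝ᵥ x) := by
  rw [star_mulVec, ← dotProduct_mulVec, conjTranspose_sub, hQ.eq, conjTranspose_smul,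
    conjTranspose_one, sub_mulVec, dotProduct_sub, smul_mulVec, one_mulVec, dotProduct_smul,
    smul_eq_mul]

end Matrix

/-- For a positive semidefinite matrix `Q`, any vector `y` and `Im z > 0`, we have
`|z| · |1 + yᴴ (Q - z)⁻¹ y| ≥ Im z`. -/
theorem quadratic_form_resolvent_lower_bound (n : ℕ) (Q : Matrix (Fin n) (Fin n) ℂ)
    (hQ : Q.PosSemidef) (y : Fin n → ℂ) (z : ℂ) (hz : 0 < z.im) :
    z.im ≤ ‖z‖ * ‖
        (1 + star y ⬝ᵥ ((Q - z • (1 : Matrix (Fin n) (Fin n) ℂ))⁻¹).mulVec y)‖ := by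
  set x := (Q - z • (1 : Matrix (Fin n) (Fin n) ℂ))⁻¹ *ᵥ y
  have hy : (Q - z • 1) *ᵥ x = y := by
    rw [mulVec_mulVec, mul_nonsing_inv _ (hQ.isHermitian.isUnit_det_sub_smul_one hz.ne'),
      one_mulVec]
  obtain ⟨hQx_re, hQx_im⟩ := Complex.nonneg_iff.mp (hQ.dotProduct_mulVec_nonneg x)
  have hxx_im : (star x ⬝ᵥ x).im = 0 :=
    (Complex.nonneg_iff.mp (dotProduct_star_self_nonneg x)).2.symm
  have him : (z * (1 + star y ⬝ᵥ x)).im = z.im * (1 + (star x ⬝ᵥ Q *ᵥ x).re) := by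
    rw [← hy, hQ.isHermitian.star_sub_smul_one_mulVec_dotProduct]
    simp only [Complex.mul_im, Complex.add_re, Complex.add_im, Complex.sub_re, Complex.sub_im,
      Complex.mul_re, Complex.one_re, Complex.one_im, Complex.star_def, Complex.conj_re,
      Complex.conj_im, ← hQx_im, hxx_im]
    ring
  calc z.im ≤ z.im * (1 + (star x ⬝ᵥ Q *ᵥ x).re) :=
        le_mul_of_one_le_right hz.le (by linarith)
    _ = (z * (1 + star y ⬝ᵥ x)).im := him.symm
    _ ≤ ‖z * (1 + star y ⬝ᵥ x)‖ := Complex.im_le_norm _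
    _ = ‖z‖ * ‖1 + star y ⬝ᵥ x‖ := norm_mul _ _
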